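/- For every $u$ in a two-sided cell $\mathbf{c}$, the element $u^*$ (from Theorem 2.3) satisfies $u \sim_{\mathcal{L}} u^*$ and $w_0 u w_0 \sim_{\mathcal{R}} u^*$. Consequently, if every left cell in $\mathbf{c}$ meets every right cell in $\mathbf{c}$ in exactly one element, then $u^*$ is the unique element of $\mathbf{c}$ in the intersection of the left cell of $u$ with the right cell of $w_0 u w_0$. -/

import Mathlib

noncomputable section

/-- The ring `ℤ[v, v⁻¹]` of Laurent polynomials. -/
abbrev LP := LaurentPolynomial ℤ

/-- The subgroup of `ℤ[v,v⁻¹]` spanned by the powers `v^n` with `n < N`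
("strictly lower powers of `v` than `v^N`"). -/
def strictBelow (N : ℤ) : Submodule ℤ LP :=
  Submodule.span ℤ ((fun n : ℤ => (LaurentPolynomial.T n : LP)) '' {n : ℤ | n < N})

/-- The subgroup of `ℤ[v,v⁻¹]` spanned by the powers `v^n` with `n > N`. -/
def strictAbove (N : ℤ) : Submodule ℤ LP :=
  Submodule.span ℤ ((fun n : ℤ => (LaurentPolynomial.T n : LP)) '' {n : ℤ | N < n})

/-- A datum packaging the Iwahori–Hecke algebra of a finite Coxeter system
`(W,S)` with weight function `L` (satisfying Lusztig's P1–P15 framework):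
the standard basis `T`, the bar involution, the Kazhdan–Lusztig bases `c`
and `c^†`, the cell preorders, the `a`-function and leading coefficients `γ`,
the distinguished involutions `𝒟`, the asymptotic ring `J` and Lusztig's
homomorphism `φ : H → J_𝒜`. -/
structure CellDatum {B W : Type} [Group W] [Fintype W] [DecidableEq W]
    {M : CoxeterMatrix B} (cs : CoxeterSystem M W) (w0 : W) where
  /-- The weight function. -/
  L : W → ℕ
  weight : ∀ w w' : W, cs.length (w * w') = cs.length w + cs.length w' →
    L (w * w') = L w + L w'
  Lpos : ∀ i : B, 0 < L (cs.simple i)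
  w0_sq : w0 * w0 = 1
  w0_long : ∀ w : W, cs.length (w0 * w) = cs.length w0 - cs.length w
  /-- The underlying module of the Hecke algebra. -/
  H : Type
  [ringH : Ring H]
  [algH : Algebra LP H]
  /-- The standard basis `T_x`. -/
  T : W → H
  basisT : Module.Basis W LP H
  basisT_eq : ∀ w : W, basisT w = T w
  T_mul : ∀ w w' : W, cs.length (w * w') = cs.length w + cs.length w' →
    T w * T w' = T (w * w')
  T_quad : ∀ i : B,
    (T (cs.simple i) - (LaurentPolynomial.T ((L (cs.simple i) : ℤ)) : LP) • (1 : H)) *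
      (T (cs.simple i) + (LaurentPolynomial.T (-(L (cs.simple i) : ℤ)) : LP) • (1 : H)) = 0
  T_unit : ∀ w : W, IsUnit (T w)
  /-- Inverses of the standard basis elements. -/
  Ti : W → H
  T_Ti : ∀ w : W, T w * Ti w = 1 ∧ Ti w * T w = 1
  /-- The bar involution of `ℤ[v,v⁻¹]`. -/
  barA : LP →+* LP
  barA_T : ∀ n : ℤ, barA (LaurentPolynomial.T n) = LaurentPolynomial.T (-n)
  /-- The bar involution of `H`. -/
  bar : H →+* H
  bar_smul : ∀ (f : LP) (h : H), bar (f • h) = barA f • bar h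
  bar_T : ∀ w : W, bar (T w) = Ti w⁻¹
  /-- The Kazhdan–Lusztig basis `c_x`. -/
  c : W → H
  basisC : Module.Basis W LP H
  basisC_eq : ∀ w : W, basisC w = c w
  /-- The Kazhdan–Lusztig polynomials `p_{y,x}`. -/
  p : W → W → LP
  c_eq : ∀ x : W, c x = ∑ y : W, p y x • T y
  p_diag : ∀ x : W, p x x = 1
  p_low : ∀ y x : W, y ≠ x → p y x ∈ strictBelow 0
  c_bar : ∀ x : W, bar (c x) = c x
  /-- The algebra automorphism `h ↦ h^†`, `T_x ↦ (-1)^{l(x)} T_{x⁻¹}⁻¹`. -/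
  dag : H →+* H
  dag_smul : ∀ (f : LP) (h : H), dag (f • h) = f • dag h
  dag_T : ∀ x : W, dag (T x) = ((-1) ^ cs.length x : ℤ) • Ti x⁻¹
  /-- The basis `c_x^†`. -/
  cdag : W → H
  cdag_def : ∀ x : W, cdag x = dag (c x)
  basisCdag : Module.Basis W LP H
  basisCdag_eq : ∀ x : W, basisCdag x = cdag x
  /-- The preorder `≤_L`. -/
  leL : W → W → Prop
  leL_iff : ∀ z x : W, leL z x ↔ Relation.ReflTransGen
      (fun z' x' => ∃ h : H, basisC.repr (h * c x') z' ≠ 0) z x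
  /-- The preorder `≤_R`. -/
  leR : W → W → Prop
  leR_iff : ∀ z x : W, leR z x ↔ Relation.ReflTransGen
      (fun z' x' => ∃ h : H, basisC.repr (c x' * h) z' ≠ 0) z x
  /-- The preorder `≤_LR`. -/
  leLR : W → W → Prop
  leLR_iff : ∀ z x : W, leLR z x ↔ Relation.ReflTransGen
      (fun z' x' => ∃ h h' : H, basisC.repr (h * c x' * h') z' ≠ 0) z x
  /-- The structure constants `h_{x,y,z}` of the basis `c_x^†`. -/
  hstr : W → W → W → LP
  hstr_def : ∀ x y : W, cdag x * cdag y = ∑ z : W, hstr x y z • cdag z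
  /-- Lusztig's `a`-function. -/
  aF : W → ℕ
  /-- The leading coefficients `γ_{x,y,z}`. -/
  γ : W → W → W → ℤ
  hstr_low : ∀ x y z : W,
    hstr x y z - (γ x y z⁻¹ : ℤ) • (LaurentPolynomial.T (aF z : ℤ) : LP) ∈
      strictBelow (aF z : ℤ)
  hstr_high : ∀ x y z : W,
    hstr x y z - (γ x y z⁻¹ : ℤ) • (LaurentPolynomial.T (-(aF z : ℤ)) : LP) ∈
      strictAbove (-(aF z : ℤ))
  γ_ne : ∀ z : W, ∃ x y : W, γ x y z⁻¹ ≠ 0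
  aF_const : ∀ y z : W, leLR y z → leLR z y → aF y = aF z
  /-- The set `𝒟` of distinguished involutions. -/
  Dset : Finset W
  Dsq : ∀ d ∈ Dset, d * d = 1
  /-- The signs `n_d`. -/
  nd : W → ℤ
  nd_val : ∀ d ∈ Dset, nd d = γ d d d
  nd_sign : ∀ d ∈ Dset, nd d = 1 ∨ nd d = -1
  /-- The distinguished involution `d_x` in the left cell of `x`. -/
  dinv : W → W
  dinv_mem : ∀ x : W, dinv x ∈ Dset
  dinv_simL : ∀ x : W, leL x (dinv x) ∧ leL (dinv x) x
  dinv_unique : ∀ x : W, ∀ d ∈ Dset, leL x d → leL d x → d = dinv x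
  /-- The asymptotic ring `J`. -/
  J : Type
  [ringJ : Ring J]
  /-- The standard basis `t_w` of `J`. -/
  tJ : W → J
  basisJ : Module.Basis W ℤ J
  basisJ_eq : ∀ w : W, basisJ w = tJ w
  tJ_mul : ∀ x y : W, tJ x * tJ y = ∑ z : W, γ x y z⁻¹ • tJ z
  J_one : (1 : J) = ∑ d ∈ Dset, nd d • tJ d
  /-- The `𝒜`-algebra `J_𝒜 = 𝒜 ⊗ J`. -/
  JA : Type
  [ringJA : Ring JA]
  [algJA : Algebra LP JA]
  tA : W → JA
  basisJA : Module.Basis W LP JA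
  basisJA_eq : ∀ w : W, basisJA w = tA w
  tA_mul : ∀ x y : W, tA x * tA y = ∑ z : W, ((γ x y z⁻¹ : ℤ) : LP) • tA z
  /-- Lusztig's homomorphism `φ : H → J_𝒜`. -/
  phi : H →ₐ[LP] JA
  phi_cdag : ∀ x : W,
    phi (cdag x) = ∑ z : W, (nd (dinv z) • hstr x (dinv z) z) • tA z

attribute [instance] CellDatum.ringH CellDatum.algH CellDatum.ringJ
  CellDatum.ringJA CellDatum.algJA

variable {B W : Type} [Group W] [Fintype W] [DecidableEq W]
  {M : CoxeterMatrix B} {cs : CoxeterSystem M W} {w0 : W}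

/-- Left cell equivalence `∼_L`. -/
def CellDatum.simL (D : CellDatum cs w0) (x y : W) : Prop := D.leL x y ∧ D.leL y x

/-- Right cell equivalence `∼_R`. -/
def CellDatum.simR (D : CellDatum cs w0) (x y : W) : Prop := D.leR x y ∧ D.leR y x

/-- Two-sided cell equivalence `∼_LR`. -/
def CellDatum.simLR (D : CellDatum cs w0) (x y : W) : Prop := D.leLR x y ∧ D.leLR y x

/-- The ideal `𝓗^{<𝐜}` attached to the two-sided cell `𝐜` of `u`: the span of
the `c_y^†` with `y <_{LR} 𝐜`. -/
def CellDatum.ltIdeal (D : CellDatum cs w0) (u : W) : Submodule LP D.H :=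
  Submodule.span LP (D.cdag '' {y : W | D.leLR y u ∧ ¬ D.simLR y u})


section Aux2

open LaurentPolynomial in
lemma lp_sum (f : LP) : f = ∑ n ∈ f.coeff.support, (f.coeff n) • T n := by
  refine LaurentPolynomial.ext fun m => ?_
  rw [AddMonoidAlgebra.coeff_sum, Finsupp.finset_sum_apply]
  simp only [AddMonoidAlgebra.coeff_smul_apply, LaurentPolynomial.T_apply, smul_eq_mul, mul_ite,
    mul_one, mul_zero]
  rw [Finset.sum_ite_eq']
  split_ifs with h
  · rfl
  · exact Finsupp.notMem_support_iff.mp h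

lemma T_apply (n m : ℤ) : (LaurentPolynomial.T n : LP).coeff m = if n = m then 1 else 0 :=
  LaurentPolynomial.T_apply m n

lemma mem_strictBelow_iff {N : ℤ} {f : LP} :
    f ∈ strictBelow N ↔ ∀ n ∈ f.coeff.support, n < N := by
  constructor
  · intro hf
    refine Submodule.span_induction ?_ ?_ ?_ ?_ hf
    · rintro x ⟨n, hn, rfl⟩ m hm
      rw [show (LaurentPolynomial.T n : LP).coeff = Finsupp.single n 1 from
        Finsupp.ext fun k => by rw [T_apply, Finsupp.single_apply]] at hm
      have := Finsupp.support_single_subset hm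
      simp only [Finset.mem_singleton] at this
      exact this ▸ hn
    · intro n hn; simp at hn
    · intro x y _ _ hx hy n hn
      rw [AddMonoidAlgebra.coeff_add] at hn
      rcases Finset.mem_union.mp (Finsupp.support_add hn) with h | h
      · exact hx n h
      · exact hy n h
    · intro a x _ hx n hn
      rw [AddMonoidAlgebra.coeff_smul] at hn
      exact hx n (Finsupp.support_smul hn)
  · intro h
    rw [lp_sum f]
    refine Submodule.sum_mem _ fun n hn => Submodule.smul_mem _ _ ?_
    exact Submodule.subset_span ⟨n, h n hn, rfl⟩

variable {B W : Type} [Group W] [Fintype W] [DecidableEq W]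
  {M : CoxeterMatrix B} {cs : CoxeterSystem M W} {w0 : W} (D : CellDatum cs w0)

include D

lemma aux_w0_inv : w0⁻¹ = w0 := inv_eq_of_mul_eq_one_right D.w0_sq

lemma aux_sig_sig (x : W) : w0 * (w0 * x * w0) * w0 = x := by
  have h := D.w0_sq
  calc w0 * (w0 * x * w0) * w0 = (w0 * w0) * x * (w0 * w0) := by group
  _ = x := by rw [h]; group

lemma aux_len_le (w : W) : cs.length w ≤ cs.length w0 := by
  have h1 := D.w0_long w
  have h2 := D.w0_long (w0 * w)
  rw [← mul_assoc, D.w0_sq, one_mul] at h2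
  omega

lemma aux_len_sig (x : W) : cs.length (w0 * x * w0) = cs.length x := by
  have h1 : cs.length (x * w0) = cs.length w0 - cs.length x := by
    rw [← cs.length_inv, mul_inv_rev, aux_w0_inv D, D.w0_long, cs.length_inv]
  have h2 := D.w0_long (x * w0)
  rw [← mul_assoc] at h2
  rw [h2, h1]
  have := aux_len_le D x
  omega

lemma aux_T_w0_mul (x : W) : D.T w0 * D.T x = D.T (w0 * x * w0) * D.T w0 := by
  have hxle := aux_len_le D x
  have hA : D.T (w0 * x⁻¹) * D.T x = D.T w0 := by
    have hlen : cs.length ((w0 * x⁻¹) * x) = cs.length (w0 * x⁻¹) + cs.length x := by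
      rw [mul_assoc, inv_mul_cancel, mul_one, D.w0_long, cs.length_inv]
      omega
    rw [D.T_mul _ _ hlen, mul_assoc, inv_mul_cancel, mul_one]
  have hB : D.T (w0 * x * w0) * D.T (w0 * x⁻¹) = D.T w0 := by
    have hprod : (w0 * x * w0) * (w0 * x⁻¹) = w0 := by
      have h := D.w0_sq
      calc (w0 * x * w0) * (w0 * x⁻¹) = w0 * x * (w0 * w0) * x⁻¹ := by group
      _ = w0 := by rw [h]; group
    have hlen : cs.length ((w0 * x * w0) * (w0 * x⁻¹)) =
        cs.length (w0 * x * w0) + cs.length (w0 * x⁻¹) := by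
      rw [hprod, aux_len_sig D, D.w0_long, cs.length_inv]
      omega
    rw [D.T_mul _ _ hlen, hprod]
  calc D.T w0 * D.T x = (D.T (w0 * x * w0) * D.T (w0 * x⁻¹)) * D.T x := by rw [hB]
  _ = D.T (w0 * x * w0) * (D.T (w0 * x⁻¹) * D.T x) := by rw [mul_assoc]
  _ = D.T (w0 * x * w0) * D.T w0 := by rw [hA]

end Aux2
section Aux3

variable {B W : Type} [Group W] [Fintype W] [DecidableEq W]
  {M : CoxeterMatrix B} {cs : CoxeterSystem M W} {w0 : W} (D : CellDatum cs w0)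

/-- Conjugation by `T_{w0}`. -/
def aux_conj (h : D.H) : D.H := D.T w0 * h * D.Ti w0

include D

lemma aux_eq_of_T (f g : D.H →ₗ[LP] D.H) (h : ∀ x, f (D.T x) = g (D.T x)) : f = g :=
  D.basisT.ext fun x => by rw [D.basisT_eq]; exact h x

lemma aux_central (h : D.H) : (D.T w0 * D.T w0) * h = h * (D.T w0 * D.T w0) := by
  have key : LinearMap.mulLeft LP (D.T w0 * D.T w0) =
      LinearMap.mulRight LP (D.T w0 * D.T w0) := by
    refine aux_eq_of_T D _ _ fun x => ?_
    rw [LinearMap.mulLeft_apply, LinearMap.mulRight_apply, mul_assoc, aux_T_w0_mul D x,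
      ← mul_assoc, aux_T_w0_mul D (w0 * x * w0), aux_sig_sig D, mul_assoc]
  exact LinearMap.congr_fun key h

lemma aux_conj_T (x : W) : aux_conj D (D.T x) = D.T (w0 * x * w0) := by
  unfold aux_conj
  rw [aux_T_w0_mul D x, mul_assoc, (D.T_Ti w0).1, mul_one]

lemma aux_Tw0_comm (h : D.H) : D.T w0 * h = aux_conj D h * D.T w0 := by
  unfold aux_conj
  rw [mul_assoc, (D.T_Ti w0).2, mul_one]

lemma aux_conj_conj (h : D.H) : aux_conj D (aux_conj D h) = h := by
  unfold aux_conj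
  have hc := aux_central D h
  have e1 : D.T w0 * (D.T w0 * h * D.Ti w0) * D.Ti w0 =
      (D.T w0 * D.T w0 * h) * (D.Ti w0 * D.Ti w0) := by simp only [mul_assoc]
  have e2 : (D.T w0 * D.T w0) * (D.Ti w0 * D.Ti w0) = 1 := by
    calc (D.T w0 * D.T w0) * (D.Ti w0 * D.Ti w0)
        = D.T w0 * ((D.T w0 * D.Ti w0) * D.Ti w0) := by simp only [mul_assoc]
      _ = 1 := by rw [(D.T_Ti w0).1, one_mul, (D.T_Ti w0).1]
  rw [e1, hc, mul_assoc, e2, mul_one]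

lemma aux_conj_mul (a b : D.H) : aux_conj D (a * b) = aux_conj D a * aux_conj D b := by
  unfold aux_conj
  rw [show D.T w0 * a * D.Ti w0 * (D.T w0 * b * D.Ti w0)
      = D.T w0 * a * ((D.Ti w0 * D.T w0) * (b * D.Ti w0)) from by simp only [mul_assoc],
    (D.T_Ti w0).2, one_mul]
  simp only [mul_assoc]

lemma aux_conj_add (a b : D.H) : aux_conj D (a + b) = aux_conj D a + aux_conj D b := by
  unfold aux_conj; rw [mul_add, add_mul]

lemma aux_conj_smul (f : LP) (h : D.H) : aux_conj D (f • h) = f • aux_conj D h := by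
  unfold aux_conj; rw [mul_smul_comm, smul_mul_assoc]

lemma aux_bar_Tw0 : D.bar (D.T w0) = D.Ti w0 := by rw [D.bar_T, aux_w0_inv D]

lemma aux_bar_Tiw0 : D.bar (D.Ti w0) = D.T w0 := by
  have h1 : D.bar (D.Ti w0) * D.Ti w0 = 1 := by
    have h0 : D.bar (D.Ti w0) * D.bar (D.T w0) = 1 := by
      rw [← map_mul, (D.T_Ti w0).2, map_one]
    rwa [aux_bar_Tw0 D] at h0
  calc D.bar (D.Ti w0) = D.bar (D.Ti w0) * (D.Ti w0 * D.T w0) := by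
        rw [(D.T_Ti w0).2, mul_one]
    _ = (D.bar (D.Ti w0) * D.Ti w0) * D.T w0 := by rw [mul_assoc]
    _ = D.T w0 := by rw [h1, one_mul]

lemma aux_bar_conj (h : D.H) : D.bar (aux_conj D h) = aux_conj D (D.bar h) := by
  have key : ∀ g, aux_conj D (D.bar (aux_conj D g)) = D.bar g := by
    intro g
    unfold aux_conj
    rw [map_mul, map_mul, aux_bar_Tw0 D, aux_bar_Tiw0 D]
    calc D.T w0 * (D.Ti w0 * D.bar g * D.T w0) * D.Ti w0
        = (D.T w0 * D.Ti w0) * D.bar g * (D.T w0 * D.Ti w0) := by simp only [mul_assoc]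
      _ = D.bar g := by rw [(D.T_Ti w0).1, one_mul, mul_one]
  have := key (aux_conj D h)
  rw [aux_conj_conj D h] at this
  exact this.symm

omit [Group W] [Fintype W] [DecidableEq W] D in
lemma aux_sign_sq (n : ℕ) : ((-1 : ℤ) ^ n) * ((-1 : ℤ) ^ n) = 1 := by
  rw [← pow_add]; exact Even.neg_one_pow ⟨n, rfl⟩

lemma aux_dag_Ti (x : W) : D.dag (D.Ti x) = ((-1 : ℤ) ^ cs.length x) • D.T x⁻¹ := by
  have h1 : D.dag (D.Ti x) * D.dag (D.T x) = 1 := by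
    rw [← map_mul, (D.T_Ti x).2, map_one]
  have h2 : D.dag (D.T x) * (((-1 : ℤ) ^ cs.length x) • D.T x⁻¹) = 1 := by
    rw [D.dag_T, smul_mul_assoc, mul_smul_comm, smul_smul, aux_sign_sq,
      one_smul, (D.T_Ti x⁻¹).2]
  exact left_inv_eq_right_inv h1 h2

lemma aux_dag_dag (h : D.H) : D.dag (D.dag h) = h := by
  let F : D.H →ₗ[LP] D.H :=
    { toFun := fun h => D.dag (D.dag h)
      map_add' := by intro a b; simp only [map_add]
      map_smul' := by intro f h; simp only [D.dag_smul, RingHom.id_apply] }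
  have key : F = LinearMap.id := by
    refine aux_eq_of_T D _ _ fun x => ?_
    show D.dag (D.dag (D.T x)) = D.T x
    rw [D.dag_T x, map_zsmul, aux_dag_Ti D x⁻¹, inv_inv, cs.length_inv, smul_smul,
      aux_sign_sq, one_smul]
  exact LinearMap.congr_fun key h

lemma aux_repr_sum (b : Module.Basis W LP D.H) (e : W → D.H) (hbe : ∀ w, b w = e w)
    (g : W → LP) (y : W) : b.repr (∑ z, g z • e z) y = g y := by
  simp_rw [← hbe]
  rw [map_sum, Finsupp.finset_sum_apply]
  have h1 : ∀ z : W, (b.repr (g z • b z)) y = if z = y then g z else 0 := by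
    intro z
    rw [map_smul, Finsupp.smul_apply, b.repr_self, Finsupp.single_apply, smul_eq_mul]
    split_ifs <;> simp
  rw [Finset.sum_congr rfl (fun z _ => h1 z), Finset.sum_ite_eq' Finset.univ y g]
  simp

lemma aux_repr_dag (h : D.H) (w : W) :
    D.basisCdag.repr (D.dag h) w = D.basisC.repr h w := by
  let dagL : D.H →ₗ[LP] D.H :=
    { toFun := D.dag
      map_add' := by intro a b; simp only [map_add]
      map_smul' := by intro f h; simp only [D.dag_smul, RingHom.id_apply] }
  have key : (Finsupp.lapply w ∘ₗ D.basisCdag.repr.toLinearMap ∘ₗ dagL) =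
      (Finsupp.lapply w ∘ₗ D.basisC.repr.toLinearMap) := by
    refine D.basisC.ext fun z => ?_
    simp only [LinearMap.comp_apply, Finsupp.lapply_apply, LinearEquiv.coe_toLinearMap]
    have : dagL (D.basisC z) = D.basisCdag z := by
      show D.dag (D.basisC z) = D.basisCdag z
      rw [D.basisC_eq, ← D.cdag_def, D.basisCdag_eq]
    rw [this, Module.Basis.repr_self, Module.Basis.repr_self]
  exact congrArg (fun p : LP => p) (LinearMap.congr_fun key h)

end Aux3
section Aux4

variable {B W : Type} [Group W] [Fintype W] [DecidableEq W]
  {M : CoxeterMatrix B} {cs : CoxeterSystem M W} {w0 : W} (D : CellDatum cs w0)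

include D

lemma aux_leL_of {z x : W} (hh : ∃ h : D.H, D.basisCdag.repr (h * D.cdag x) z ≠ 0) :
    D.leL z x := by
  obtain ⟨h, hh⟩ := hh
  rw [D.leL_iff]
  refine Relation.ReflTransGen.single ⟨D.dag h, ?_⟩
  rw [← aux_repr_dag D, map_mul, aux_dag_dag D, ← D.cdag_def]
  exact hh

lemma aux_leR_of {z x : W} (hh : ∃ h : D.H, D.basisCdag.repr (D.cdag x * h) z ≠ 0) :
    D.leR z x := by
  obtain ⟨h, hh⟩ := hh
  rw [D.leR_iff]
  refine Relation.ReflTransGen.single ⟨D.dag h, ?_⟩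
  rw [← aux_repr_dag D, map_mul, aux_dag_dag D, ← D.cdag_def]
  exact hh

lemma aux_leLR_of_left {w y : W} (hh : ∃ h : D.H, D.basisCdag.repr (h * D.cdag y) w ≠ 0) :
    D.leLR w y := by
  obtain ⟨h, hh⟩ := hh
  rw [D.leLR_iff]
  refine Relation.ReflTransGen.single ⟨D.dag h, 1, ?_⟩
  rw [mul_one, ← aux_repr_dag D, map_mul, aux_dag_dag D, ← D.cdag_def]
  exact hh

lemma aux_leLR_of_right {w y : W} (hh : ∃ h : D.H, D.basisCdag.repr (D.cdag y * h) w ≠ 0) :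
    D.leLR w y := by
  obtain ⟨h, hh⟩ := hh
  rw [D.leLR_iff]
  refine Relation.ReflTransGen.single ⟨1, D.dag h, ?_⟩
  rw [one_mul, ← aux_repr_dag D, map_mul, aux_dag_dag D, ← D.cdag_def]
  exact hh

lemma aux_leLR_trans {x y z : W} (h1 : D.leLR x y) (h2 : D.leLR y z) : D.leLR x z := by
  rw [D.leLR_iff] at *
  exact Relation.ReflTransGen.trans h1 h2

lemma aux_leL_leLR {z x : W} (h : D.leL z x) : D.leLR z x := by
  rw [D.leL_iff] at h
  rw [D.leLR_iff]
  exact Relation.ReflTransGen.mono (fun a b ⟨h', hh⟩ => ⟨h', 1, by rwa [mul_one]⟩) _ _ h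

lemma aux_leR_leLR {z x : W} (h : D.leR z x) : D.leLR z x := by
  rw [D.leR_iff] at h
  rw [D.leLR_iff]
  exact Relation.ReflTransGen.mono (fun a b ⟨h', hh⟩ => ⟨1, h', by rwa [one_mul]⟩) _ _ h

lemma aux_ideal_coeff (u₀ : W) {ξ : D.H} (hξ : ξ ∈ D.ltIdeal u₀) (w : W)
    (hw : ¬ (D.leLR w u₀ ∧ ¬ D.simLR w u₀)) : D.basisCdag.repr ξ w = 0 := by
  have hle : D.ltIdeal u₀ ≤
      LinearMap.ker ((Finsupp.lapply w).comp D.basisCdag.repr.toLinearMap) := by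
    refine Submodule.span_le.mpr ?_
    rintro _ ⟨y, hy, rfl⟩
    simp only [SetLike.mem_coe, LinearMap.mem_ker, LinearMap.comp_apply,
      Finsupp.lapply_apply, LinearEquiv.coe_toLinearMap]
    rw [← D.basisCdag_eq, Module.Basis.repr_self, Finsupp.single_apply]
    have hyw : y ≠ w := fun e => hw (e ▸ hy)
    simp [hyw]
  exact hle hξ

lemma aux_mem_ideal (u₀ : W) (h : D.H)
    (hs : ∀ w, D.basisCdag.repr h w ≠ 0 → (D.leLR w u₀ ∧ ¬ D.simLR w u₀)) :
    h ∈ D.ltIdeal u₀ := by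
  rw [← Module.Basis.sum_repr D.basisCdag h]
  refine Submodule.sum_mem _ fun w _ => ?_
  by_cases h0 : D.basisCdag.repr h w = 0
  · rw [h0, zero_smul]; exact Submodule.zero_mem _
  · exact Submodule.smul_mem _ _
      (Submodule.subset_span ⟨w, hs w h0, (D.basisCdag_eq w).symm⟩)

lemma aux_ideal_mul_right (u₀ : W) {ξ : D.H} (hξ : ξ ∈ D.ltIdeal u₀) (h : D.H) :
    ξ * h ∈ D.ltIdeal u₀ := by
  refine aux_mem_ideal D u₀ _ fun w hw => ?_
  have expand : ξ * h = ∑ y, D.basisCdag.repr ξ y • (D.basisCdag y * h) := by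
    calc ξ * h = (∑ y, D.basisCdag.repr ξ y • D.basisCdag y) * h := by
          rw [Module.Basis.sum_repr]
      _ = ∑ y, D.basisCdag.repr ξ y • (D.basisCdag y * h) := by
          rw [Finset.sum_mul]; simp only [smul_mul_assoc]
  rw [expand, map_sum, Finsupp.finset_sum_apply] at hw
  obtain ⟨y, -, hy⟩ := Finset.exists_ne_zero_of_sum_ne_zero hw
  rw [map_smul, Finsupp.smul_apply, smul_eq_mul] at hy
  have hy1 : D.basisCdag.repr ξ y ≠ 0 := left_ne_zero_of_mul hy
  have hy2 : D.basisCdag.repr (D.cdag y * h) w ≠ 0 := by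
    rw [← D.basisCdag_eq]; exact right_ne_zero_of_mul hy
  have hyS : D.leLR y u₀ ∧ ¬ D.simLR y u₀ := by
    by_contra hc; exact hy1 (aux_ideal_coeff D u₀ hξ y hc)
  have hwy : D.leLR w y := aux_leLR_of_right D ⟨h, hy2⟩
  exact ⟨aux_leLR_trans D hwy hyS.1,
    fun hsim => hyS.2 ⟨hyS.1, aux_leLR_trans D hsim.2 hwy⟩⟩

end Aux4
section Aux5

variable {B W : Type} [Group W] [Fintype W] [DecidableEq W]
  {M : CoxeterMatrix B} {cs : CoxeterSystem M W} {w0 : W} (D : CellDatum cs w0)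

/-- `aux_conj` as a linear map. -/
def aux_conjL : D.H →ₗ[LP] D.H where
  toFun := aux_conj D
  map_add' := aux_conj_add D
  map_smul' := by intro f h; simp only [aux_conj_smul D, RingHom.id_apply]

include D

lemma aux_conj_one : aux_conj D (1 : D.H) = 1 := by
  unfold aux_conj; rw [mul_one, (D.T_Ti w0).1]

lemma aux_conj_zsmul (n : ℤ) (h : D.H) : aux_conj D (n • h) = n • aux_conj D h := by
  unfold aux_conj; rw [mul_smul_comm, smul_mul_assoc]

lemma aux_conj_Ti (y : W) : aux_conj D (D.Ti y) = D.Ti (w0 * y * w0) := by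
  have h1 : aux_conj D (D.Ti y) * D.T (w0 * y * w0) = 1 := by
    rw [← aux_conj_T D y, ← aux_conj_mul D, (D.T_Ti y).2, aux_conj_one D]
  exact left_inv_eq_right_inv h1 (D.T_Ti (w0 * y * w0)).1

omit D in
lemma aux_sig_inv (D : CellDatum cs w0) (x : W) : (w0 * x * w0)⁻¹ = w0 * x⁻¹ * w0 := by
  have h := aux_w0_inv D
  simp [mul_inv_rev, h, mul_assoc]

lemma aux_dag_conj (h : D.H) : D.dag (aux_conj D h) = aux_conj D (D.dag h) := by
  let dagL : D.H →ₗ[LP] D.H :=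
    { toFun := D.dag
      map_add' := by intro a b; simp only [map_add]
      map_smul' := by intro f h; simp only [D.dag_smul, RingHom.id_apply] }
  have key : dagL ∘ₗ aux_conjL D = aux_conjL D ∘ₗ dagL := by
    refine aux_eq_of_T D _ _ fun x => ?_
    show D.dag (aux_conj D (D.T x)) = aux_conj D (D.dag (D.T x))
    rw [aux_conj_T D x, D.dag_T (w0 * x * w0), D.dag_T x, aux_len_sig D,
      aux_sig_inv D, aux_conj_zsmul D, aux_conj_Ti D]
  exact LinearMap.congr_fun key h

lemma aux_barA_apply (f : LP) (m : ℤ) : (D.barA f).coeff m = f.coeff (-m) := by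
  conv_lhs => rw [lp_sum f]
  rw [map_sum, AddMonoidAlgebra.coeff_sum, Finsupp.finset_sum_apply]
  have h1 : ∀ n ∈ f.coeff.support, (D.barA (f.coeff n • LaurentPolynomial.T n)).coeff m
      = if n = -m then f.coeff n else 0 := by
    intro n _
    rw [map_zsmul, D.barA_T, AddMonoidAlgebra.coeff_smul_apply, T_apply, smul_eq_mul]
    by_cases hnm : n = -m
    · simp [hnm]
    · have h2 : ¬ (-n = m) := fun h => hnm (by omega)
      simp [hnm, h2]
  rw [Finset.sum_congr rfl h1, Finset.sum_ite_eq' f.coeff.support (-m) f.coeff]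
  by_cases hm : -m ∈ f.coeff.support
  · simp [hm]
  · simp [hm, Finsupp.notMem_support_iff.mp hm]

lemma aux_repr_bar (h : D.H) (z : W) :
    D.basisC.repr (D.bar h) z = D.barA (D.basisC.repr h z) := by
  conv_lhs => rw [← Module.Basis.sum_repr D.basisC h]
  rw [map_sum, map_sum, Finsupp.finset_sum_apply]
  have h1 : ∀ y, (D.basisC.repr (D.bar (D.basisC.repr h y • D.basisC y))) z
      = if y = z then D.barA (D.basisC.repr h y) else 0 := by
    intro y
    rw [D.basisC_eq, D.bar_smul, D.c_bar, ← D.basisC_eq, map_smul, Finsupp.smul_apply,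
      Module.Basis.repr_self, Finsupp.single_apply, smul_eq_mul]
    split_ifs <;> simp
  rw [Finset.sum_congr rfl (fun y _ => h1 y), Finset.sum_ite_eq' Finset.univ z]
  simp

end Aux5
section Aux6

variable {B W : Type} [Group W] [Fintype W] [DecidableEq W]
  {M : CoxeterMatrix B} {cs : CoxeterSystem M W} {w0 : W} (D : CellDatum cs w0)

include D

lemma aux_conj_c (x : W) : aux_conj D (D.c x) = D.c (w0 * x * w0) := by
  have hσσ : ∀ y : W, w0 * (w0 * y * w0) * w0 = y := aux_sig_sig D
  have hbij : Function.Bijective (fun y : W => w0 * y * w0) :=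
    Function.Involutive.bijective hσσ
  have hconj_sum : aux_conj D (D.c x) = ∑ y, D.p (w0 * y * w0) x • D.T y := by
    have h0 : aux_conj D (D.c x) = ∑ y, D.p y x • D.T (w0 * y * w0) := by
      show aux_conjL D (D.c x) = _
      rw [D.c_eq, map_sum]
      refine Finset.sum_congr rfl fun y _ => ?_
      show aux_conjL D (D.p y x • D.T y) = _
      rw [map_smul]
      show D.p y x • aux_conj D (D.T y) = _
      rw [aux_conj_T D y]
    rw [h0]
    exact Fintype.sum_bijective _ hbij _ _ (fun y => by rw [hσσ y])
  set d : D.H := aux_conj D (D.c x) - D.c (w0 * x * w0) with hd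
  suffices hd0 : d = 0 by
    have := sub_eq_zero.mp hd0
    exact this
  have hTrepr : ∀ y, D.basisT.repr d y ∈ strictBelow 0 := by
    intro y
    have hdsum : d = ∑ y, (D.p (w0 * y * w0) x - D.p y (w0 * x * w0)) • D.T y := by
      rw [hd, hconj_sum, D.c_eq (w0 * x * w0), ← Finset.sum_sub_distrib]
      simp_rw [sub_smul]
    rw [hdsum, aux_repr_sum D D.basisT D.T D.basisT_eq]
    by_cases hy : y = w0 * x * w0
    · rw [hy, hσσ, D.p_diag, D.p_diag, sub_self]; exact Submodule.zero_mem _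
    · refine Submodule.sub_mem _ (D.p_low _ _ ?_) (D.p_low _ _ hy)
      intro he
      exact hy (by rw [← he, hσσ])
  have hdbar : D.bar d = d := by
    rw [hd, map_sub, aux_bar_conj D, D.c_bar, D.c_bar]
  set q : W → LP := fun z => D.basisC.repr d z with hq
  have hqbar : ∀ z, D.barA (q z) = q z := by
    intro z
    show D.barA (D.basisC.repr d z) = D.basisC.repr d z
    rw [← aux_repr_bar D, hdbar]
  by_contra hne
  have hex : ∃ z, q z ≠ 0 := by
    by_contra hall
    push_neg at hall
    refine hne ((LinearEquiv.map_eq_zero_iff D.basisC.repr).mp (Finsupp.ext fun z => hall z))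
  obtain ⟨z₀, hz₀⟩ := hex
  set Sfin : Finset ℤ := Finset.univ.sup (fun z => (q z).coeff.support) with hS
  have hmemS : ∀ z m, m ∈ (q z).coeff.support → m ∈ Sfin := fun z m hm =>
    Finset.mem_sup.mpr ⟨z, Finset.mem_univ z, hm⟩
  have hSne : Sfin.Nonempty := by
    obtain ⟨m, hm⟩ := Finsupp.support_nonempty_iff.mpr (mt AddMonoidAlgebra.coeff_eq_zero.mp hz₀)
    exact ⟨m, hmemS z₀ m hm⟩
  set n : ℤ := Sfin.max' hSne with hn
  have hle : ∀ z m, m ∈ (q z).coeff.support → m ≤ n := fun z m hm =>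
    Finset.le_max' _ _ (hmemS z m hm)
  obtain ⟨z₁, -, hz₁⟩ : ∃ z ∈ Finset.univ, n ∈ (q z).coeff.support := by
    exact Finset.mem_sup.mp (Sfin.max'_mem hSne)
  have hn0 : 0 ≤ n := by
    have h1 : (q z₁).coeff n ≠ 0 := Finsupp.mem_support_iff.mp hz₁
    have h2 : (q z₁).coeff (-n) = (q z₁).coeff n := by
      conv_rhs => rw [← hqbar z₁]
      rw [aux_barA_apply D]
    have h3 : -n ∈ (q z₁).coeff.support := Finsupp.mem_support_iff.mpr (by rw [h2]; exact h1)
    have := hle z₁ (-n) h3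
    omega
  have hform : D.basisT.repr d z₁ = ∑ z, q z * D.p z₁ z := by
    have hd2 : d = ∑ y, (∑ z, q z * D.p y z) • D.T y := by
      conv_lhs => rw [← Module.Basis.sum_repr D.basisC d]
      calc ∑ z, D.basisC.repr d z • D.basisC z
          = ∑ z, ∑ y, (q z * D.p y z) • D.T y := by
            refine Finset.sum_congr rfl fun z _ => ?_
            rw [D.basisC_eq, D.c_eq, Finset.smul_sum]
            simp_rw [smul_smul]
            rfl
        _ = ∑ y, ∑ z, (q z * D.p y z) • D.T y := Finset.sum_comm
        _ = ∑ y, (∑ z, q z * D.p y z) • D.T y := by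
            refine Finset.sum_congr rfl fun y _ => ?_
            rw [Finset.sum_smul]
    rw [hd2, aux_repr_sum D D.basisT D.T D.basisT_eq]
  have hcoeff : (D.basisT.repr d z₁).coeff n = (q z₁).coeff n := by
    rw [hform, AddMonoidAlgebra.coeff_sum, Finsupp.finset_sum_apply]
    rw [Finset.sum_eq_single z₁ ?_ ?_]
    · rw [D.p_diag, mul_one]
    · intro z _ hz
      by_contra hcon
      have hnmem : n ∈ (q z * D.p z₁ z).coeff.support := by
        rw [Finsupp.mem_support_iff]
        exact hcon
      have hsub := AddMonoidAlgebra.support_coeff_mul_subset (q z) (D.p z₁ z) hnmem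
      obtain ⟨m1, hm1, m2, hm2, hmn⟩ := Finset.mem_add.mp hsub
      have hm1' := hle z m1 hm1
      have hz₁z : z₁ ≠ z := fun e => hz (e ▸ rfl)
      have hm2' : m2 < 0 := mem_strictBelow_iff.mp (D.p_low z₁ z hz₁z) m2 hm2
      omega
    · intro hz; exact absurd (Finset.mem_univ z₁) hz
  have hlt : n < 0 := by
    refine mem_strictBelow_iff.mp (hTrepr z₁) n ?_
    rw [Finsupp.mem_support_iff, hcoeff]
    exact Finsupp.mem_support_iff.mp hz₁
  omega

lemma aux_conj_cdag (x : W) : aux_conj D (D.cdag x) = D.cdag (w0 * x * w0) := by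
  rw [D.cdag_def, ← aux_dag_conj D, aux_conj_c D, ← D.cdag_def]

end Aux6
section Aux7

variable {B W : Type} [Group W] [Fintype W] [DecidableEq W]
  {M : CoxeterMatrix B} {cs : CoxeterSystem M W} {w0 : W} (D : CellDatum cs w0)

include D

/-- The key consequence of Theorem 2.3 for a single element: if
`v^k T_{w0} c_u^† ≡ e · c_{su}^†` mod `𝓗^{<𝐜}` with `su` in the cell of `u₀`,
then `su ≤_L u` and `su ∼_R w₀ u w₀`. -/
lemma aux_key {u₀ u su : W} {k e : ℤ} (hsu : D.simLR su u₀) (he : e = 1 ∨ e = -1)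
    (hmem : (LaurentPolynomial.T k : LP) • (D.T w0 * D.cdag u) - e • D.cdag su ∈
      D.ltIdeal u₀) :
    D.leL su u ∧ D.leR su (w0 * u * w0) ∧ D.leR (w0 * u * w0) su := by
  have hsuS : ¬ (D.leLR su u₀ ∧ ¬ D.simLR su u₀) := fun hc => hc.2 hsu
  have hene : (e • (1 : LP)) ≠ 0 := by
    rcases he with h | h <;> rw [h] <;> simp
  have hreprsu : D.basisCdag.repr (D.cdag su) su = 1 := by
    rw [← D.basisCdag_eq, Module.Basis.repr_self, Finsupp.single_eq_same]
  have hc1 : D.basisCdag.repr ((LaurentPolynomial.T k : LP) • (D.T w0 * D.cdag u)) su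
      = e • (1 : LP) := by
    have h0 := aux_ideal_coeff D u₀ hmem su hsuS
    rw [map_sub, Finsupp.sub_apply] at h0
    rw [sub_eq_zero.mp h0, map_zsmul, Finsupp.smul_apply, hreprsu]
  have hleL : D.leL su u := by
    refine aux_leL_of D ⟨(LaurentPolynomial.T k : LP) • D.T w0, ?_⟩
    rw [smul_mul_assoc, hc1]
    exact hene
  have hcom : D.T w0 * D.cdag u = D.cdag (w0 * u * w0) * D.T w0 := by
    rw [aux_Tw0_comm D, aux_conj_cdag D]
  have hmem' : (LaurentPolynomial.T k : LP) • (D.cdag (w0 * u * w0) * D.T w0) -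
      e • D.cdag su ∈ D.ltIdeal u₀ := by rwa [hcom] at hmem
  have hc2 : D.basisCdag.repr
      (D.cdag (w0 * u * w0) * ((LaurentPolynomial.T k : LP) • D.T w0)) su ≠ 0 := by
    have h0 := aux_ideal_coeff D u₀ hmem' su hsuS
    rw [map_sub, Finsupp.sub_apply] at h0
    rw [mul_smul_comm, sub_eq_zero.mp h0, map_zsmul, Finsupp.smul_apply, hreprsu]
    exact hene
  have hleR1 : D.leR su (w0 * u * w0) := aux_leR_of D ⟨_, hc2⟩
  have hσS : ¬ (D.leLR (w0 * u * w0) u₀ ∧ ¬ D.simLR (w0 * u * w0) u₀) := by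
    rintro ⟨ha1, ha2⟩
    exact ha2 ⟨ha1, aux_leLR_trans D hsu.2 (aux_leR_leLR D hleR1)⟩
  have hη : ((LaurentPolynomial.T k : LP) • (D.cdag (w0 * u * w0) * D.T w0) -
      e • D.cdag su) * ((LaurentPolynomial.T (-k) : LP) • D.Ti w0) ∈ D.ltIdeal u₀ :=
    aux_ideal_mul_right D u₀ hmem' _
  have hexp : ((LaurentPolynomial.T k : LP) • (D.cdag (w0 * u * w0) * D.T w0) -
      e • D.cdag su) * ((LaurentPolynomial.T (-k) : LP) • D.Ti w0)
      = D.cdag (w0 * u * w0) -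
        e • (D.cdag su * ((LaurentPolynomial.T (-k) : LP) • D.Ti w0)) := by
    rw [sub_mul]
    congr 1
    · rw [smul_mul_assoc, mul_smul_comm, smul_smul, ← LaurentPolynomial.T_add,
        add_neg_cancel, LaurentPolynomial.T_zero, one_smul, mul_assoc,
        (D.T_Ti w0).1, mul_one]
    · rw [smul_mul_assoc]
  rw [hexp] at hη
  have h0 := aux_ideal_coeff D u₀ hη (w0 * u * w0) hσS
  rw [map_sub, Finsupp.sub_apply, ← D.basisCdag_eq, Module.Basis.repr_self,
    Finsupp.single_eq_same] at h0
  have h4 : e • D.basisCdag.repr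
      (D.cdag su * ((LaurentPolynomial.T (-k) : LP) • D.Ti w0)) (w0 * u * w0)
      = 1 := by
    have := sub_eq_zero.mp h0
    rw [map_zsmul, Finsupp.smul_apply] at this
    exact this.symm
  have h5 : D.basisCdag.repr
      (D.cdag su * ((LaurentPolynomial.T (-k) : LP) • D.Ti w0)) (w0 * u * w0) ≠ 0 := by
    intro hz
    rw [hz, smul_zero] at h4
    exact one_ne_zero h4.symm
  exact ⟨hleL, hleR1, aux_leR_of D ⟨_, h5⟩⟩

end Aux7
/-- 2.4: for `u` in the two-sided cell `𝐜` (of `u₀`),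
`u ∼_L u^*` and `w₀ u w₀ ∼_R u^*`; consequently, if every left cell of `𝐜`
meets every right cell of `𝐜` in exactly one element, then `u^*` is the unique
element of the intersection of the left cell of `u` with the right cell of
`w₀ u w₀`. -/
theorem statement14 {B W : Type} [Group W] [Fintype W] [DecidableEq W]
    {M : CoxeterMatrix B} (cs : CoxeterSystem M W) (w0 : W)
    (D : CellDatum cs w0) (u₀ : W) (a a' : ℕ)
    (ha : ∀ y : W, D.simLR y u₀ → D.aF y = a)
    (ha' : ∀ y : W, D.simLR y (w0 * u₀) → D.aF y = a')
    (star : W → W) (ε : W → ℤ)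
    (hstar : ∀ u : W, D.simLR u u₀ →
      D.simLR (star u) u₀ ∧ star (star u) = u ∧
      (ε u = 1 ∨ ε u = -1) ∧
      ((LaurentPolynomial.T ((a : ℤ) - (a' : ℤ)) : LP) • (D.T w0 * D.cdag u) -
        ε u • D.cdag (star u) ∈ D.ltIdeal u₀) ∧
      star (w0 * u * w0) = (star u⁻¹)⁻¹) :
    (∀ u : W, D.simLR u u₀ →
      D.simL u (star u) ∧ D.simR (w0 * u * w0) (star u)) ∧
    ((∀ y z : W, D.simLR y u₀ → D.simLR z u₀ →
        ∃! w : W, D.simL w y ∧ D.simR w z) →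
      ∀ u : W, D.simLR u u₀ →
        ∀ w : W, (D.simL w u ∧ D.simR w (w0 * u * w0)) ↔ w = star u) := by
  have main1 : ∀ u : W, D.simLR u u₀ →
      D.simL u (star u) ∧ D.simR (w0 * u * w0) (star u) := by
    intro u hu
    obtain ⟨h1, h2, h3, h4, -⟩ := hstar u hu
    obtain ⟨hL1, hR1, hR2⟩ := aux_key D h1 h3 h4
    obtain ⟨h1', h2', h3', h4', -⟩ := hstar (star u) h1
    rw [h2] at h4'
    obtain ⟨hL2, -, -⟩ := aux_key D hu h3' h4'
    exact ⟨⟨hL2, hL1⟩, ⟨hR2, hR1⟩⟩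
  refine ⟨main1, ?_⟩
  intro huniq u hu w
  have h1 := (hstar u hu).1
  have hm := main1 u hu
  have hσsim : D.simLR (w0 * u * w0) u₀ :=
    ⟨aux_leLR_trans D (aux_leR_leLR D hm.2.1) h1.1,
     aux_leLR_trans D h1.2 (aux_leR_leLR D hm.2.2)⟩
  obtain ⟨w', hw', huniq'⟩ := huniq u (w0 * u * w0) hu hσsim
  constructor
  · intro hw
    rw [huniq' w hw, huniq' (star u) ⟨⟨hm.1.2, hm.1.1⟩, ⟨hm.2.2, hm.2.1⟩⟩]
  · rintro rfl
    exact ⟨⟨hm.1.2, hm.1.1⟩, ⟨hm.2.2, hm.2.1⟩⟩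

end
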